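/- arXiv:2411.13571 — 3 statements merged into one kernel-verified Lean document; each statement's English description precedes it below -/
import Mathlib

section
/- For symmetric positive definite Gramians P and Q, there exists an invertible matrix T such that T P Tᵀ = T⁻ᵀ Q T⁻¹ = diag(σ₁,…,σ_N), where σᵢ = √{λᵢ(PQ)} are the Hankel singular values (existence of a balancing transformation). -/
open Matrix

/-- Existence of a balancing transformation: for symmetric positive definite Gramians `P`, `Q`
there is an invertible `T` with `T P Tᵀ = T⁻ᵀ Q T⁻¹ = diag(σ₁,…,σ_N)`, where the `σᵢ` are the
Hankel singular values, i.e. `σᵢ > 0` and `σᵢ²` is an eigenvalue of `P Q`. -/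
theorem balancing_transformation_exists {N : ℕ}
    (P Q : Matrix (Fin N) (Fin N) ℝ) (hP : P.PosDef) (hQ : Q.PosDef) :
    ∃ (T : Matrix (Fin N) (Fin N) ℝ) (σ : Fin N → ℝ), IsUnit T.det ∧
      T * P * Tᵀ = Matrix.diagonal σ ∧
      (T⁻¹)ᵀ * Q * T⁻¹ = Matrix.diagonal σ ∧
      ∀ i, 0 < σ i ∧ ((σ i : ℝ) ^ 2 : ℝ) ∈ spectrum ℝ (P * Q) := by
  open scoped MatrixOrder in set R := CFC.sqrt P with hRdef
  have hRsd : R.PosSemidef := by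
    open scoped MatrixOrder in exact (CFC.sqrt_nonneg P).posSemidef
  have hRH : Rᵀ = R := hRsd.isHermitian
  have hRR : R * R = P := by
    open scoped MatrixOrder in exact CFC.sqrt_mul_sqrt_self P hP.posSemidef.nonneg
  have hRdet : IsUnit R.det := by
    have : IsUnit (R.det * R.det) := by
      rw [← det_mul, hRR]; exact hP.det_pos.ne'.isUnit
    exact isUnit_of_mul_isUnit_left this
  have hRI : R * R⁻¹ = 1 := mul_nonsing_inv R hRdet
  have hIR : R⁻¹ * R = 1 := nonsing_inv_mul R hRdet
  have hRIT : (R⁻¹)ᵀ = R⁻¹ := by rw [transpose_nonsing_inv, hRH]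
  -- M := R * Q * R is PosDef
  have hM : (R * Q * R).PosDef := by
    refine Matrix.PosDef.of_dotProduct_mulVec_pos ?_ ?_
    · show (R * Q * R)ᴴ = _
      rw [conjTranspose_mul, conjTranspose_mul, hRsd.isHermitian, hQ.isHermitian]
      rw [mul_assoc]
    · intro x hx
      have hx' : R *ᵥ x ≠ 0 := by
        intro h
        apply hx
        have := congrArg (fun v => R⁻¹ *ᵥ v) h
        simpa [mulVec_mulVec, hIR] using this
      have key : ∀ v w : Fin N → ℝ, (R *ᵥ v) ⬝ᵥ w = v ⬝ᵥ R *ᵥ w := by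
        intro v w
        rw [dotProduct_mulVec]
        congr 1
        conv_rhs => rw [← hRH]
        rw [vecMul_transpose]
      have hpos := hQ.dotProduct_mulVec_pos hx'
      rw [star_trivial] at hpos
      calc (0:ℝ) < (R *ᵥ x) ⬝ᵥ Q *ᵥ (R *ᵥ x) := hpos
        _ = x ⬝ᵥ R *ᵥ (Q *ᵥ (R *ᵥ x)) := key _ _
        _ = star x ⬝ᵥ (R * Q * R) *ᵥ x := by
            simp [mulVec_mulVec, Matrix.mul_assoc]
  have hMH : (R * Q * R).IsHermitian := hM.isHermitian
  set U : Matrix (Fin N) (Fin N) ℝ := (hMH.eigenvectorUnitary : Matrix (Fin N) (Fin N) ℝ)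
    with hU
  set lam : Fin N → ℝ := hMH.eigenvalues with hlamdef
  have hspec : R * Q * R = U * diagonal lam * star U := by
    have := hMH.spectral_theorem
    rw [Unitary.conjStarAlgAut_apply] at this
    exact this
  have hUsU : star U * U = 1 := mem_unitaryGroup_iff'.mp hMH.eigenvectorUnitary.2
  have hUUs : U * star U = 1 := mem_unitaryGroup_iff.mp hMH.eigenvectorUnitary.2
  have hsUT : (star U)ᵀ = U := transpose_transpose U
  have hlampos : ∀ i, 0 < lam i := hM.eigenvalues_pos
  -- the balancing data
  set σ : Fin N → ℝ := fun i => Real.sqrt (lam i) with hσdef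
  set d : Fin N → ℝ := fun i => Real.sqrt (σ i) with hddef
  have hσpos : ∀ i, 0 < σ i := fun i => Real.sqrt_pos.mpr (hlampos i)
  have hdpos : ∀ i, 0 < d i := fun i => Real.sqrt_pos.mpr (hσpos i)
  have hdd : ∀ i, d i * d i = σ i := fun i => Real.mul_self_sqrt (hσpos i).le
  have hσσ : ∀ i, σ i * σ i = lam i := fun i => Real.mul_self_sqrt (hlampos i).le
  set e : Fin N → ℝ := fun i => (d i)⁻¹ with hedef
  set T : Matrix (Fin N) (Fin N) ℝ := diagonal d * star U * R⁻¹ with hT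
  set S : Matrix (Fin N) (Fin N) ℝ := R * U * diagonal e with hS
  have hTS : T * S = 1 := by
    rw [hT, hS]
    simp only [Matrix.mul_assoc]
    rw [← Matrix.mul_assoc R⁻¹ R, hIR, Matrix.one_mul,
      ← Matrix.mul_assoc (star U) U, hUsU, Matrix.one_mul,
      diagonal_mul_diagonal]
    convert diagonal_one with i
    exact mul_inv_cancel₀ (hdpos i).ne'
  have hST : S * T = 1 := by
    rw [hT, hS]
    simp only [Matrix.mul_assoc]
    rw [← Matrix.mul_assoc (diagonal e) (diagonal d), diagonal_mul_diagonal]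
    have : (fun i => e i * d i) = fun _ => (1:ℝ) := by
      funext i; exact inv_mul_cancel₀ (hdpos i).ne'
    rw [this]
    rw [show (diagonal (fun _ => (1:ℝ)) : Matrix (Fin N) (Fin N) ℝ) = 1 from diagonal_one]
    rw [Matrix.one_mul, ← Matrix.mul_assoc U (star U), hUUs, Matrix.one_mul, hRI]
  have hTdet : IsUnit T.det := isUnit_det_of_left_inverse hST
  have hTinv : T⁻¹ = S := inv_eq_right_inv hTS
  refine ⟨T, σ, hTdet, ?_, ?_, ?_⟩
  · -- T * P * Tᵀ = diagonal σ
    rw [hT, ← hRR, transpose_mul, transpose_mul, hsUT, hRIT, diagonal_transpose]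
    simp only [Matrix.mul_assoc]
    rw [← Matrix.mul_assoc R⁻¹ R, hIR, Matrix.one_mul,
      ← Matrix.mul_assoc R R⁻¹, hRI, Matrix.one_mul,
      ← Matrix.mul_assoc (star U) U, hUsU, Matrix.one_mul,
      diagonal_mul_diagonal]
    exact congrArg _ (funext hdd)
  · -- (T⁻¹)ᵀ * Q * T⁻¹ = diagonal σ
    rw [hTinv, hS, transpose_mul, transpose_mul, diagonal_transpose, hRH,
      show Uᵀ = star U from rfl]
    simp only [Matrix.mul_assoc]
    rw [show R * (Q * (R * (U * diagonal e))) = (R * Q * R) * (U * diagonal e) by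
        simp only [Matrix.mul_assoc],
      hspec]
    simp only [Matrix.mul_assoc]
    rw [← Matrix.mul_assoc (star U) U, hUsU, Matrix.one_mul,
      ← Matrix.mul_assoc (star U) U, hUsU, Matrix.one_mul,
      ← Matrix.mul_assoc (diagonal e) (diagonal lam), diagonal_mul_diagonal,
      diagonal_mul_diagonal]
    refine congrArg Matrix.diagonal (funext fun i => ?_)
    show (d i)⁻¹ * lam i * (d i)⁻¹ = σ i
    rw [show lam i = d i * d i * (d i * d i) by rw [hdd, hσσ]]
    have h := (hdpos i).ne'
    rw [← hdd i]
    field_simp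
  · -- positivity and spectrum
    intro i
    refine ⟨hσpos i, ?_⟩
    have hsq : σ i ^ 2 = lam i := by rw [sq]; exact hσσ i
    rw [hsq]
    have hmem : lam i ∈ spectrum ℝ (R * Q * R) := hMH.eigenvalues_mem_spectrum_real i
    have hRu : IsUnit R := (isUnit_iff_isUnit_det R).mpr hRdet
    have hconj : P * Q = (hRu.unit : Matrix (Fin N) (Fin N) ℝ) * (R * Q * R) *
        ((hRu.unit⁻¹ : (Matrix (Fin N) (Fin N) ℝ)ˣ) : Matrix (Fin N) (Fin N) ℝ) := by
      rw [coe_units_inv, IsUnit.unit_spec]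
      simp only [Matrix.mul_assoc]
      rw [hRI, Matrix.mul_one, ← Matrix.mul_assoc, hRR]
    rw [hconj, spectrum.units_conjugate]
    exact hmem
end

section
/- If P is the symmetric positive semidefinite solution of the Lyapunov equation A P + P Aᵀ = −B Bᵀ with A Hurwitz, and K ∈ ℝ^{N×k} has orthonormal columns with range containing the range of P, then X = Kᵀ P K solves the projected Lyapunov equation (Kᵀ A K) X + X (Kᵀ A K)ᵀ = −(Kᵀ B)(Kᵀ B)ᵀ, and P = K X Kᵀ. -/
/-!
Transposing `K Kᵀ P = P` with `P` symmetric gives `P K Kᵀ = P` as well, so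
`P = K (Kᵀ P K) Kᵀ`; and in each product of the compressed matrices `Kᵀ A K` and `Kᵀ P K` a
factor `K Kᵀ` stands next to `P` and can be dropped. Hence compressing the Lyapunov equation
by `Kᵀ (·) K` yields the projected one.
-/

open Matrix

namespace Matrix

variable {R n m l : Type*} [CommRing R] [Fintype n] [Fintype m]

theorem mul_mul_transpose_eq_of_isSymm {P : Matrix n n R} (hP : P.IsSymm)
    {K : Matrix n m R} (hrange : K * Kᵀ * P = P) : P * K * Kᵀ = P := by
  simpa only [transpose_mul, transpose_transpose, hP.eq, Matrix.mul_assoc]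
    using congrArg transpose hrange

theorem eq_mul_compression_mul_transpose {P : Matrix n n R} (hP : P.IsSymm)
    {K : Matrix n m R} (hrange : K * Kᵀ * P = P) : P = K * (Kᵀ * P * K) * Kᵀ :=
  calc P = K * Kᵀ * P * K * Kᵀ := by
        rw [hrange, mul_mul_transpose_eq_of_isSymm hP hrange]
    _ = K * (Kᵀ * P * K) * Kᵀ := by simp only [Matrix.mul_assoc]

theorem compression_mul_compression {A P : Matrix n n R} {K : Matrix n m R}
    (hrange : K * Kᵀ * P = P) : Kᵀ * A * K * (Kᵀ * P * K) = Kᵀ * (A * P) * K :=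
  calc Kᵀ * A * K * (Kᵀ * P * K) = Kᵀ * A * (K * Kᵀ * P) * K := by
        simp only [Matrix.mul_assoc]
    _ = Kᵀ * (A * P) * K := by rw [hrange, Matrix.mul_assoc Kᵀ A]

theorem compression_mul_transpose_compression {A P : Matrix n n R} (hP : P.IsSymm)
    {K : Matrix n m R} (hrange : K * Kᵀ * P = P) :
    Kᵀ * P * K * (Kᵀ * A * K)ᵀ = Kᵀ * (P * Aᵀ) * K :=
  calc Kᵀ * P * K * (Kᵀ * A * K)ᵀ = Kᵀ * (P * K * Kᵀ) * Aᵀ * K := by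
        simp only [transpose_mul, transpose_transpose, Matrix.mul_assoc]
    _ = Kᵀ * (P * Aᵀ) * K := by
        rw [mul_mul_transpose_eq_of_isSymm hP hrange, Matrix.mul_assoc Kᵀ P]

theorem compression_lyapunov [Fintype l] {A P : Matrix n n R} {B : Matrix n l R}
    (hP : P.IsSymm) (hlyap : A * P + P * Aᵀ = -(B * Bᵀ))
    {K : Matrix n m R} (hrange : K * Kᵀ * P = P) :
    (Kᵀ * A * K) * (Kᵀ * P * K) + (Kᵀ * P * K) * (Kᵀ * A * K)ᵀ = -((Kᵀ * B) * (Kᵀ * B)ᵀ) :=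
  calc (Kᵀ * A * K) * (Kᵀ * P * K) + (Kᵀ * P * K) * (Kᵀ * A * K)ᵀ
        = Kᵀ * (A * P + P * Aᵀ) * K := by
          rw [compression_mul_compression hrange,
            compression_mul_transpose_compression hP hrange, Matrix.mul_add, Matrix.add_mul]
    _ = -((Kᵀ * B) * (Kᵀ * B)ᵀ) := by
          rw [hlyap]
          simp only [transpose_mul, transpose_transpose, Matrix.mul_neg, Matrix.neg_mul,
            Matrix.mul_assoc]

end Matrix

theorem projected_lyapunov_exact_general {N p k : ℕ}
    (A : Matrix (Fin N) (Fin N) ℝ) (B : Matrix (Fin N) (Fin p) ℝ)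
    (P : Matrix (Fin N) (Fin N) ℝ) (hPsd : P.PosSemidef)
    (hP : A * P + P * Aᵀ = -(B * Bᵀ))
    (K : Matrix (Fin N) (Fin k) ℝ)
    (hrange : K * Kᵀ * P = P) :
    (Kᵀ * A * K) * (Kᵀ * P * K) + (Kᵀ * P * K) * (Kᵀ * A * K)ᵀ =
      -((Kᵀ * B) * (Kᵀ * B)ᵀ) ∧
    P = K * (Kᵀ * P * K) * Kᵀ := by
  have hsymm : P.IsSymm := isHermitian_iff_isSymm.mp hPsd.isHermitian
  exact ⟨compression_lyapunov hsymm hP hrange, eq_mul_compression_mul_transpose hsymm hrange⟩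

/-- Exactness of the projected Lyapunov equation: if `P` is the symmetric positive
semidefinite solution of `A P + P Aᵀ = −B Bᵀ` with `A` Hurwitz, and `K` has orthonormal
columns whose span contains the range of `P` and is invariant under `A`, then
`X = Kᵀ P K` solves `(Kᵀ A K) X + X (Kᵀ A K)ᵀ = −(Kᵀ B)(Kᵀ B)ᵀ` and `P = K X Kᵀ`. -/
theorem projected_lyapunov_exact {N p k : ℕ}
    (A : Matrix (Fin N) (Fin N) ℝ) (B : Matrix (Fin N) (Fin p) ℝ)
    (hA : ∀ μ ∈ spectrum ℂ (A.map (Complex.ofReal · )), μ.re < 0)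
    (P : Matrix (Fin N) (Fin N) ℝ) (hPsd : P.PosSemidef)
    (hP : A * P + P * Aᵀ = -(B * Bᵀ))
    (K : Matrix (Fin N) (Fin k) ℝ)
    (hK : Kᵀ * K = 1)
    (hrange : K * Kᵀ * P = P)
    (hinv : K * Kᵀ * (A * K) = A * K) :
    (Kᵀ * A * K) * (Kᵀ * P * K) + (Kᵀ * P * K) * (Kᵀ * A * K)ᵀ =
      -((Kᵀ * B) * (Kᵀ * B)ᵀ) ∧
    P = K * (Kᵀ * P * K) * Kᵀ :=
  projected_lyapunov_exact_general A B P hPsd hP K hrange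
end

section
/- If a balanced stable system is truncated so that the retained and truncated Hankel singular values are disjoint (σ_r > σ_{r+1}), then the truncated system matrix Ã (the leading r×r block of A) is again Hurwitz stable. -/
/-!
Suppose `Ã v = μ v` with `v ≠ 0` and `Re μ ≥ 0`, and pad `v` by zeros to `x`. As `Σ x` is supported
on the retained indices, the observability equation gives `2 Re μ · x* Σ x = -‖L x‖²`, so `μ` is
imaginary and `L` vanishes on the space `V` of all such padded eigenvectors. For `z ∈ V` the two
Lyapunov equations then give `Aᴴ Σ z = -Σ A z` and `Bᴴ Σ z = 0`, hence `A Σ² z = Σ² A z`. So `V` is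
`Σ²`-invariant and contains an eigenvector `z` of `Σ²`, supported where `σ_i² = σ_k²` for a retained
`k`. The gap makes `σ_j² ≠ σ_k²` for every truncated `j`, which forces the truncated entries of
`A z` to vanish: `A z = μ z`, contradicting the stability of `A`.
-/

open Matrix Function

namespace Matrix

variable {ι : Type*} [Fintype ι]

/-- The eigenvectors of the compression of `A` to the coordinates in `s`, extended by zero. -/
def compressedEigenspace {R : Type*} [CommSemiring R] (A : Matrix ι ι R) (s : Set ι) (μ : R) :
    Submodule R (ι → R) where
  carrier := {z | (∀ i ∉ s, z i = 0) ∧ ∀ i ∈ s, (A *ᵥ z) i = μ * z i}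
  add_mem' := fun ⟨hx, hAx⟩ ⟨hy, hAy⟩ =>
    ⟨fun i hi => by simp [hx i hi, hy i hi],
     fun i hi => by simp only [mulVec_add, Pi.add_apply, hAx i hi, hAy i hi, mul_add]⟩
  zero_mem' := ⟨fun _ _ => rfl, fun _ _ => by simp⟩
  smul_mem' := fun c z ⟨hz, hAz⟩ =>
    ⟨fun i hi => by simp [hz i hi],
     fun i hi => by simp only [mulVec_smul, Pi.smul_apply, smul_eq_mul, hAz i hi, mul_left_comm]⟩

section CommSemiring

variable {R : Type*} [CommSemiring R] {A : Matrix ι ι R} {s : Set ι} {μ : R} {z : ι → R}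

theorem dotProduct_mulVec_of_mem_compressedEigenspace (hz : z ∈ compressedEigenspace A s μ)
    {w : ι → R} (hw : ∀ i ∉ s, w i = 0) : w ⬝ᵥ (A *ᵥ z) = μ * (w ⬝ᵥ z) := by
  rw [dotProduct, dotProduct, Finset.mul_sum]
  refine Finset.sum_congr rfl fun i _ => ?_
  by_cases hi : i ∈ s
  · rw [hz.2 i hi, mul_left_comm]
  · simp [hw i hi]

theorem diagonal_mulVec_mem_compressedEigenspace [DecidableEq ι] {d : ι → R}
    (hz : z ∈ compressedEigenspace A s μ)
    (hcomm : A *ᵥ (diagonal d *ᵥ z) = diagonal d *ᵥ (A *ᵥ z)) :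
    diagonal d *ᵥ z ∈ compressedEigenspace A s μ :=
  ⟨fun i hi => by simp [mulVec_diagonal, hz.1 i hi],
   fun i hi => by simp only [hcomm, mulVec_diagonal, hz.2 i hi, mul_left_comm]⟩

end CommSemiring

theorem compressedEigenspace_ne_bot_of_mem_spectrum_submatrix {K κ : Type*} [Field K]
    [Fintype κ] [DecidableEq κ] {A : Matrix ι ι K} {e : κ → ι} (he : Injective e) {μ : K}
    (hμ : μ ∈ spectrum K (A.submatrix e e)) :
    compressedEigenspace A (Set.range e) μ ≠ ⊥ := by
  rw [← spectrum_toLin', ← Module.End.hasEigenvalue_iff_mem_spectrum] at hμ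
  obtain ⟨v, hv, hv0⟩ := hμ.exists_hasEigenvector
  set x : ι → K := extend e v 0
  have hxe (k : κ) : x (e k) = v k := he.extend_apply v 0 k
  have hx : x ∈ compressedEigenspace A (Set.range e) μ := by
    refine ⟨fun i hi => extend_apply' (f := e) v (0 : ι → K) i hi, ?_⟩
    rintro _ ⟨k, rfl⟩
    have hAx : (A *ᵥ x) (e k) = (A.submatrix e e *ᵥ v) k :=
      (Fintype.sum_of_injective e he _ _
        (fun i hi => by simp [x, extend_apply' (f := e) v (0 : ι → K) i hi])
        fun k' => by simp [hxe]).symm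
    rw [hAx, ← toLin'_apply, Module.End.mem_eigenspace_iff.mp hv, hxe, Pi.smul_apply, smul_eq_mul]
  refine (Submodule.ne_bot_iff _).mpr ⟨x, hx, fun h0 => hv0 (funext fun k => ?_)⟩
  rw [← hxe, h0, Pi.zero_apply, Pi.zero_apply]

section Field

variable {K : Type*} [Field K] [DecidableEq ι] {A : Matrix ι ι K} {s : Set ι} {μ : K}
  {z : ι → K}

theorem mulVec_eq_smul_of_mem_compressedEigenspace {d : ι → K}
    (hd : ∀ i ∈ s, ∀ j ∉ s, d j ≠ d i) (hz : z ∈ compressedEigenspace A s μ) (hz0 : z ≠ 0)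
    {c : K} (hdz : diagonal d *ᵥ z = c • z)
    (hcomm : A *ᵥ (diagonal d *ᵥ z) = diagonal d *ᵥ (A *ᵥ z)) : A *ᵥ z = μ • z := by
  obtain ⟨k, hk⟩ := ne_iff.mp hz0
  have hks : k ∈ s := by_contra fun h => hk (hz.1 k h)
  have hc : c = d k := by
    have := congrFun hdz k
    simp only [mulVec_diagonal, Pi.smul_apply, smul_eq_mul] at this
    exact (mul_right_cancel₀ hk this).symm
  funext j
  by_cases hj : j ∈ s
  · exact hz.2 j hj
  have hAj := congrFun hcomm j
  rw [hdz, mulVec_smul, hc] at hAj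
  simp only [mulVec_diagonal, Pi.smul_apply, smul_eq_mul] at hAj
  have hAzj : (A *ᵥ z) j = 0 :=
    (mul_eq_zero.mp (by linear_combination hAj : (d k - d j) * (A *ᵥ z) j = 0)).resolve_left
      (sub_ne_zero.mpr (hd k hks j hj).symm)
  rw [hAzj, Pi.smul_apply, hz.1 j hj, smul_zero]

theorem _root_.Submodule.exists_mem_ne_zero_mulVec_eq_smul [IsAlgClosed K]
    {W : Submodule K (ι → K)} (hW : W ≠ ⊥) {M : Matrix ι ι K} (hM : ∀ z ∈ W, M *ᵥ z ∈ W) :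
    ∃ z ∈ W, z ≠ 0 ∧ ∃ c : K, M *ᵥ z = c • z := by
  have : Nontrivial W := Submodule.nontrivial_iff_ne_bot.mpr hW
  obtain ⟨c, hc⟩ := Module.End.exists_eigenvalue (M.toLin'.restrict hM)
  obtain ⟨z, hz, hz0⟩ := hc.exists_hasEigenvector
  refine ⟨z, z.2, fun h => hz0 (Subtype.ext h), c, ?_⟩
  exact congrArg Subtype.val (Module.End.mem_eigenspace_iff.mp hz)

theorem mem_spectrum_of_mulVec_eq_smul {M : Matrix ι ι K} {v : ι → K} (hv : v ≠ 0)
    (hMv : M *ᵥ v = μ • v) : μ ∈ spectrum K M := by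
  rw [← spectrum_toLin']
  exact Module.End.HasEigenvalue.mem_spectrum
    (Module.End.hasEigenvalue_of_hasEigenvector ⟨Module.End.mem_eigenspace_iff.mpr hMv, hv⟩)

end Field

theorem star_mulVec_dotProduct {R m : Type*} [Fintype m] [CommSemiring R] [StarRing R]
    (M : Matrix m ι R) (v : ι → R) (w : m → R) : star (M *ᵥ v) ⬝ᵥ w = star v ⬝ᵥ (Mᴴ *ᵥ w) := by
  rw [dotProduct_mulVec, star_mulVec]

theorem star_dotProduct_mulVec_eq {R m : Type*} [Fintype m] [CommSemiring R] [StarRing R]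
    (M : Matrix ι m R) (v : ι → R) (w : m → R) : star v ⬝ᵥ (M *ᵥ w) = star (Mᴴ *ᵥ v) ⬝ᵥ w := by
  rw [star_mulVec_dotProduct, conjTranspose_conjTranspose]

theorem star_dotProduct_lyapunov_mulVec_of_mem_compressedEigenspace {R : Type*} [CommRing R]
    [StarRing R] [DecidableEq ι] {A : Matrix ι ι R} {s : Set ι} {μ : R} {z : ι → R}
    {d : ι → R} (hd : IsSelfAdjoint d) (hz : z ∈ compressedEigenspace A s μ) :
    star z ⬝ᵥ ((Aᴴ * diagonal d + diagonal d * A) *ᵥ z)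
      = (star μ + μ) * (star z ⬝ᵥ (diagonal d *ᵥ z)) := by
  set H := diagonal d
  set q := star z ⬝ᵥ (H *ᵥ z)
  have hH : Hᴴ = H := isHermitian_diagonal_of_self_adjoint d hd
  have hq : star (H *ᵥ z) ⬝ᵥ z = q := by rw [star_mulVec_dotProduct, hH]
  have hq_star : star q = q := (star_dotProduct _ _).symm.trans hq
  have key : star (H *ᵥ z) ⬝ᵥ (A *ᵥ z) = μ * q := by
    rw [dotProduct_mulVec_of_mem_compressedEigenspace hz fun i hi => by
      simp [H, mulVec_diagonal, hz.1 i hi], hq]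
  calc star z ⬝ᵥ ((Aᴴ * H + H * A) *ᵥ z)
      = star (A *ᵥ z) ⬝ᵥ (H *ᵥ z) + star (H *ᵥ z) ⬝ᵥ (A *ᵥ z) := by
        rw [add_mulVec, dotProduct_add, ← mulVec_mulVec, ← mulVec_mulVec,
          star_mulVec_dotProduct, star_mulVec_dotProduct H, hH]
    _ = star (μ * q) + μ * q := by rw [star_dotProduct, key]
    _ = (star μ + μ) * q := by rw [star_mul', hq_star, add_mul, mul_comm]

open Complex (ofReal)

theorem isSelfAdjoint_ofReal_comp {α : Type*} (f : α → ℝ) : IsSelfAdjoint (ofReal ∘ f) :=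
  funext fun i => Complex.conj_ofReal (f i)

section Lyapunov

open ComplexOrder

variable [DecidableEq ι] {κ κ' : Type*} [Fintype κ] [Fintype κ']
  {A : Matrix ι ι ℂ} {B : Matrix ι κ ℂ} {L : Matrix κ' ι ℂ} {σ : ι → ℝ} {s : Set ι} {μ : ℂ}
  {z : ι → ℂ}

theorem star_add_self_mul_eq_neg_of_mem_compressedEigenspace
    (h₂ : Aᴴ * diagonal (ofReal ∘ σ) + diagonal (ofReal ∘ σ) * A = -(Lᴴ * L))
    (hz : z ∈ compressedEigenspace A s μ) :
    (star μ + μ) * (star z ⬝ᵥ (diagonal (ofReal ∘ σ) *ᵥ z)) = -(star (L *ᵥ z) ⬝ᵥ (L *ᵥ z)) := by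
  rw [← star_dotProduct_lyapunov_mulVec_of_mem_compressedEigenspace
    (isSelfAdjoint_ofReal_comp σ) hz, h₂, neg_mulVec, dotProduct_neg, ← mulVec_mulVec,
    ← star_mulVec_dotProduct]

theorem re_nonpos_of_mem_compressedEigenspace (hσ : ∀ i, 0 < σ i)
    (h₂ : Aᴴ * diagonal (ofReal ∘ σ) + diagonal (ofReal ∘ σ) * A = -(Lᴴ * L))
    (hz : z ∈ compressedEigenspace A s μ) (hz0 : z ≠ 0) : μ.re ≤ 0 := by
  have hq := Complex.pos_iff.mp <|
    (PosDef.diagonal (d := ofReal ∘ σ) fun i => by simpa using hσ i).dotProduct_mulVec_pos hz0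
  have hL := Complex.nonneg_iff.mp (dotProduct_star_self_nonneg (L *ᵥ z))
  have h := congrArg Complex.re (star_add_self_mul_eq_neg_of_mem_compressedEigenspace h₂ hz)
  rw [Complex.star_def, add_comm, Complex.add_conj, Complex.re_ofReal_mul, Complex.neg_re] at h
  nlinarith [hq.1, hL.1]

theorem mulVec_eq_zero_of_mem_compressedEigenspace
    (h₂ : Aᴴ * diagonal (ofReal ∘ σ) + diagonal (ofReal ∘ σ) * A = -(Lᴴ * L))
    (hre : μ.re = 0) (hz : z ∈ compressedEigenspace A s μ) : L *ᵥ z = 0 := by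
  have h := star_add_self_mul_eq_neg_of_mem_compressedEigenspace h₂ hz
  rw [Complex.star_def, add_comm, Complex.add_conj, hre, mul_zero, Complex.ofReal_zero, zero_mul,
    zero_eq_neg] at h
  exact dotProduct_star_self_eq_zero.mp h

theorem conjTranspose_mulVec_diagonal_mulVec_eq_neg
    (h₂ : Aᴴ * diagonal (ofReal ∘ σ) + diagonal (ofReal ∘ σ) * A = -(Lᴴ * L))
    (hre : μ.re = 0) (hz : z ∈ compressedEigenspace A s μ) :
    Aᴴ *ᵥ (diagonal (ofReal ∘ σ) *ᵥ z) = -(diagonal (ofReal ∘ σ) *ᵥ (A *ᵥ z)) := by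
  have h := congrArg (· *ᵥ z) h₂
  simp only [add_mulVec, neg_mulVec, ← mulVec_mulVec,
    mulVec_eq_zero_of_mem_compressedEigenspace h₂ hre hz, mulVec_zero, neg_zero] at h
  exact eq_neg_of_add_eq_zero_left h

theorem conjTranspose_mulVec_diagonal_mulVec_eq_zero
    (h₁ : A * diagonal (ofReal ∘ σ) + diagonal (ofReal ∘ σ) * Aᴴ = -(B * Bᴴ))
    (h₂ : Aᴴ * diagonal (ofReal ∘ σ) + diagonal (ofReal ∘ σ) * A = -(Lᴴ * L))
    (hre : μ.re = 0) (hz : z ∈ compressedEigenspace A s μ) :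
    Bᴴ *ᵥ (diagonal (ofReal ∘ σ) *ᵥ z) = 0 := by
  set D := diagonal (ofReal ∘ σ)
  have hD : Dᴴ = D := isHermitian_diagonal_of_self_adjoint _ (isSelfAdjoint_ofReal_comp σ)
  have hD3 (v : ι → ℂ) : D *ᵥ (D *ᵥ (D *ᵥ v)) = D ^ 3 *ᵥ v := by
    rw [pow_three, ← mulVec_mulVec, ← mulVec_mulVec]
  have hAD : Aᴴ *ᵥ (D *ᵥ z) = -(D *ᵥ (A *ᵥ z)) :=
    conjTranspose_mulVec_diagonal_mulVec_eq_neg h₂ hre hz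
  -- the first Lyapunov form at `D z` is minus the `D ^ 3`-weighted second one at `z`,
  -- which vanishes because `μ` is imaginary
  have hcube : star z ⬝ᵥ ((Aᴴ * D ^ 3 + D ^ 3 * A) *ᵥ z) = 0 := by
    rw [diagonal_pow, star_dotProduct_lyapunov_mulVec_of_mem_compressedEigenspace
      ((isSelfAdjoint_ofReal_comp σ).pow 3) hz, Complex.star_def, add_comm, Complex.add_conj, hre]
    simp
  have hcross : star (D *ᵥ z) ⬝ᵥ ((A * D + D * Aᴴ) *ᵥ (D *ᵥ z))
      = -(star z ⬝ᵥ ((Aᴴ * D ^ 3 + D ^ 3 * A) *ᵥ z)) := by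
    have hAD_term :
        star (D *ᵥ z) ⬝ᵥ (A *ᵥ (D *ᵥ (D *ᵥ z))) = -(star z ⬝ᵥ (Aᴴ *ᵥ (D ^ 3 *ᵥ z))) := by
      rw [star_dotProduct_mulVec_eq A, hAD, star_neg, neg_dotProduct, star_mulVec_dotProduct D, hD,
        hD3, star_mulVec_dotProduct A]
    have hDA_term :
        star (D *ᵥ z) ⬝ᵥ (D *ᵥ (Aᴴ *ᵥ (D *ᵥ z))) = -(star z ⬝ᵥ (D ^ 3 *ᵥ (A *ᵥ z))) := by
      rw [hAD, mulVec_neg, dotProduct_neg, star_mulVec_dotProduct D, hD, hD3]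
    rw [add_mulVec, add_mulVec, ← mulVec_mulVec, ← mulVec_mulVec, ← mulVec_mulVec,
      ← mulVec_mulVec, dotProduct_add, dotProduct_add, hAD_term, hDA_term, neg_add]
  have h := congrArg (fun M => star (D *ᵥ z) ⬝ᵥ (M *ᵥ (D *ᵥ z))) h₁
  simp only [hcross, hcube, neg_zero, neg_mulVec, dotProduct_neg, ← mulVec_mulVec,
    star_dotProduct_mulVec_eq B, zero_eq_neg] at h
  exact dotProduct_star_self_eq_zero.mp h

theorem mulVec_diagonal_sq_mulVec_comm
    (h₁ : A * diagonal (ofReal ∘ σ) + diagonal (ofReal ∘ σ) * Aᴴ = -(B * Bᴴ))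
    (h₂ : Aᴴ * diagonal (ofReal ∘ σ) + diagonal (ofReal ∘ σ) * A = -(Lᴴ * L))
    (hre : μ.re = 0) (hz : z ∈ compressedEigenspace A s μ) :
    A *ᵥ (diagonal (ofReal ∘ σ) ^ 2 *ᵥ z) = diagonal (ofReal ∘ σ) ^ 2 *ᵥ (A *ᵥ z) := by
  have h := congrArg (· *ᵥ (diagonal (ofReal ∘ σ) *ᵥ z)) h₁
  simp only [add_mulVec, neg_mulVec, ← mulVec_mulVec,
    conjTranspose_mulVec_diagonal_mulVec_eq_zero h₁ h₂ hre hz, mulVec_zero, neg_zero,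
    conjTranspose_mulVec_diagonal_mulVec_eq_neg h₂ hre hz, mulVec_neg, add_neg_eq_zero] at h
  rwa [sq, ← mulVec_mulVec, ← mulVec_mulVec]

theorem mem_spectrum_of_compressedEigenspace_ne_bot (hσ : ∀ i, 0 < σ i)
    (hgap : ∀ i ∈ s, ∀ j ∉ s, σ j ≠ σ i)
    (h₁ : A * diagonal (ofReal ∘ σ) + diagonal (ofReal ∘ σ) * Aᴴ = -(B * Bᴴ))
    (h₂ : Aᴴ * diagonal (ofReal ∘ σ) + diagonal (ofReal ∘ σ) * A = -(Lᴴ * L))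
    (hμ : 0 ≤ μ.re) (hV : compressedEigenspace A s μ ≠ ⊥) : μ ∈ spectrum ℂ A := by
  obtain ⟨x, hx, hx0⟩ := (Submodule.ne_bot_iff _).mp hV
  have hre : μ.re = 0 := (re_nonpos_of_mem_compressedEigenspace hσ h₂ hx hx0).antisymm hμ
  have hcomm (z) (hz : z ∈ compressedEigenspace A s μ) :=
    mulVec_diagonal_sq_mulVec_comm h₁ h₂ hre hz
  simp only [diagonal_pow] at hcomm
  obtain ⟨z, hz, hz0, c, hc⟩ := Submodule.exists_mem_ne_zero_mulVec_eq_smul hV fun z hz =>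
    diagonal_mulVec_mem_compressedEigenspace hz (hcomm z hz)
  have hgap_sq : ∀ i ∈ s, ∀ j ∉ s, ((ofReal ∘ σ) ^ 2) j ≠ ((ofReal ∘ σ) ^ 2) i :=
    fun i hi j hj => by
      simpa [← Complex.ofReal_pow, pow_left_inj₀ (hσ j).le (hσ i).le two_ne_zero] using
        hgap i hi j hj
  exact mem_spectrum_of_mulVec_eq_smul hz0
    (mulVec_eq_smul_of_mem_compressedEigenspace hgap_sq hz hz0 hc (hcomm z hz))

end Lyapunov

theorem conjTranspose_map_ofReal {m n : Type*} (M : Matrix m n ℝ) :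
    (M.map ofReal)ᴴ = Mᵀ.map ofReal := by
  rw [← conjTranspose_eq_transpose_of_trivial, conjTranspose_map]
  exact fun x => (Complex.conj_ofReal x).symm

theorem controllability_lyapunov_map_ofReal {κ : Type*} [DecidableEq ι] [Fintype κ]
    {P : Matrix ι ι ℝ} {Q : Matrix ι κ ℝ} {σ : ι → ℝ}
    (h : P * diagonal σ + diagonal σ * Pᵀ = -(Q * Qᵀ)) :
    P.map ofReal * diagonal (ofReal ∘ σ) + diagonal (ofReal ∘ σ) * (P.map ofReal)ᴴ
      = -(Q.map ofReal * (Q.map ofReal)ᴴ) := by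
  have := congrArg (Matrix.map · Complex.ofRealHom) h
  simp only [Matrix.map_add _ (map_add Complex.ofRealHom),
    Matrix.map_neg _ (map_neg Complex.ofRealHom), Matrix.map_mul,
    diagonal_map (map_zero Complex.ofRealHom)] at this
  rw [conjTranspose_map_ofReal, conjTranspose_map_ofReal]
  exact this

theorem observability_lyapunov_map_ofReal {κ : Type*} [DecidableEq ι] [Fintype κ]
    {P : Matrix ι ι ℝ} {Q : Matrix κ ι ℝ} {σ : ι → ℝ}
    (h : Pᵀ * diagonal σ + diagonal σ * P = -(Qᵀ * Q)) :
    (P.map ofReal)ᴴ * diagonal (ofReal ∘ σ) + diagonal (ofReal ∘ σ) * P.map ofReal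
      = -((Q.map ofReal)ᴴ * Q.map ofReal) := by
  have h' :=
    controllability_lyapunov_map_ofReal (P := Pᵀ) (Q := Qᵀ) (by rwa [transpose_transpose])
  rwa [conjTranspose_map_ofReal, transpose_transpose, ← conjTranspose_map_ofReal,
    conjTranspose_map_ofReal Qᵀ, transpose_transpose, ← conjTranspose_map_ofReal] at h'

end Matrix

theorem balanced_truncation_stable_general {N p q : ℕ}
    (A : Matrix (Fin N) (Fin N) ℝ)
    (B : Matrix (Fin N) (Fin p) ℝ) (L : Matrix (Fin q) (Fin N) ℝ)
    (hA : ∀ μ ∈ spectrum ℂ (A.map (Complex.ofReal · )), μ.re < 0)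
    (σ : Fin N → ℝ)
    (hσpos : ∀ i, 0 < σ i)
    (hbal₁ : A * Matrix.diagonal σ + Matrix.diagonal σ * Aᵀ = -(B * Bᵀ))
    (hbal₂ : Aᵀ * Matrix.diagonal σ + Matrix.diagonal σ * A = -(Lᵀ * L))
    (r : ℕ) (hr : r ≤ N)
    (hgap : ∀ i j : Fin N, (i : ℕ) < r → r ≤ (j : ℕ) → σ j < σ i) :
    ∀ μ ∈ spectrum ℂ ((A.submatrix (Fin.castLE hr) (Fin.castLE hr)).map (Complex.ofReal · )),
      μ.re < 0 := by
  intro μ hμ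
  by_contra! hre
  have hgap_range :
      ∀ i ∈ Set.range (Fin.castLE hr), ∀ j ∉ Set.range (Fin.castLE hr), σ j ≠ σ i := by
    simp only [Fin.range_castLE, Set.mem_ofPred_eq, not_lt]
    exact fun i hi j hj => (hgap i j hi hj).ne
  rw [← submatrix_map] at hμ
  have hV := compressedEigenspace_ne_bot_of_mem_spectrum_submatrix (Fin.castLE_injective hr) hμ
  exact (hA μ (mem_spectrum_of_compressedEigenspace_ne_bot hσpos hgap_range
    (controllability_lyapunov_map_ofReal hbal₁) (observability_lyapunov_map_ofReal hbal₂) hre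
    hV)).not_ge hre

/-- Stability of the balanced-truncated system: if a balanced Hurwitz-stable system is
truncated so that the retained and truncated Hankel singular values are disjoint
(`σ_r > σ_{r+1}`), then the leading `r × r` block of `A` is again Hurwitz stable. -/
theorem balanced_truncation_stable {N p q : ℕ}
    (A : Matrix (Fin N) (Fin N) ℝ)
    (B : Matrix (Fin N) (Fin p) ℝ) (L : Matrix (Fin q) (Fin N) ℝ)
    (hA : ∀ μ ∈ spectrum ℂ (A.map (Complex.ofReal · )), μ.re < 0)
    (σ : Fin N → ℝ)
    (hσpos : ∀ i, 0 < σ i) (hσmono : ∀ i j : Fin N, i ≤ j → σ j ≤ σ i)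
    (hbal₁ : A * Matrix.diagonal σ + Matrix.diagonal σ * Aᵀ = -(B * Bᵀ))
    (hbal₂ : Aᵀ * Matrix.diagonal σ + Matrix.diagonal σ * A = -(Lᵀ * L))
    (r : ℕ) (hr : r ≤ N)
    (hgap : ∀ i j : Fin N, (i : ℕ) < r → r ≤ (j : ℕ) → σ j < σ i) :
    ∀ μ ∈ spectrum ℂ ((A.submatrix (Fin.castLE hr) (Fin.castLE hr)).map (Complex.ofReal · )),
      μ.re < 0 :=
  balanced_truncation_stable_general A B L hA σ hσpos hbal₁ hbal₂ r hr hgap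
end
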